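/- For the LIF neuron with soft reset, if the scale-bearing incoming block of hidden neuron i is normalized so that ‖P_in[:,i]‖_p^p + |U_thr,i|^p = 1 with normalization scalar a_i = (‖P_in[:,i]‖_p^p + |U_thr,i|^p)^{1/p} > 0, then applying the membrane rescaling with A = Diag(1/a₁,…,1/a_m) yields an LIF network with identical spike outputs at all timesteps and normalized scale-bearing blocks. -/

import Mathlib

/-!
Dividing a neuron's input weights, threshold and membrane potential by the same `c > 0` divides
every subsequent membrane potential by `c` (the leak is linear and the soft reset subtracts the
rescaled threshold), and the threshold activation only sees the sign of the membrane, which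
`c > 0` preserves. Choosing `c = a_i`, the `ℓ_p` norm of the neuron's (weights, threshold)
block, makes that block's `ℓ_p^p` mass `a_i^p / a_i^p = 1`.
-/

open Finset

/-- Threshold activation: σ(x) = 1 if x ≥ 0 else 0. -/
noncomputable def thresh (x : ℝ) : ℝ := if 0 ≤ x then 1 else 0

theorem thresh_div_of_pos (x : ℝ) {c : ℝ} (hc : 0 < c) : thresh (x / c) = thresh x := by
  simp only [thresh, le_div_iff₀ hc, zero_mul]

noncomputable def lifStep (I β θ u : ℝ) : ℝ := I + u * β - thresh u * θ

theorem lifStep_div (I β θ u : ℝ) {c : ℝ} (hc : 0 < c) :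
    lifStep (I / c) β (θ / c) (u / c) = lifStep I β θ u / c := by
  simp only [lifStep, thresh_div_of_pos u hc]
  ring

theorem lif_trajectory_div {I : ℕ → ℝ} {β θ c : ℝ} (hc : 0 < c) {u v : ℕ → ℝ}
    (hu : ∀ t, u (t + 1) = lifStep (I (t + 1)) β θ (u t))
    (hv : ∀ t, v (t + 1) = lifStep (I (t + 1) / c) β (θ / c) (v t))
    (h0 : v 0 = u 0 / c) (t : ℕ) : v t = u t / c := by
  induction t with
  | zero => exact h0
  | succ t ih => rw [hv, hu, ih, lifStep_div _ _ _ _ hc]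

theorem sum_abs_div_rpow_eq_one {ι : Type*} [Fintype ι] {p : ℝ} (hp : p ≠ 0) {x : ι → ℝ}
    {a : ℝ} (ha : a = (∑ j, |x j| ^ p) ^ (1 / p)) (hpos : 0 < a) :
    ∑ j, |x j / a| ^ p = 1 := by
  have hap : a ^ p = ∑ k, |x k| ^ p := by
    rw [ha, one_div, Real.rpow_inv_rpow (sum_nonneg fun k _ => by positivity) hp]
  have hdiv (y : ℝ) : |y / a| ^ p = |y| ^ p / a ^ p := by
    rw [abs_div, abs_of_pos hpos, Real.div_rpow (abs_nonneg y) hpos.le]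
  simp only [hdiv, ← sum_div, ← hap]
  exact div_self (Real.rpow_pos_of_pos hpos p).ne'

/-- Rescaling each LIF neuron's membrane by the inverse of its scale-bearing
block norm `a_i = (‖P_in[:,i]‖_p^p + |U_thr,i|^p)^{1/p}` yields an LIF network
with identical spike outputs at all timesteps whose scale-bearing blocks are
normalized to unit ℓ_p^p mass. -/
theorem lif_normalization_preserves_spikes {dIn m : ℕ} (p : ℝ) (hp : 1 ≤ p)
    (Pin : Matrix (Fin dIn) (Fin m) ℝ) (B Uthr : Fin m → ℝ)
    (a : Fin m → ℝ)
    (ha_def : ∀ i, a i = ((∑ j, |Pin j i| ^ p) + |Uthr i| ^ p) ^ (1 / p))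
    (ha : ∀ i, 0 < a i)
    (Sprev : ℕ → Fin dIn → ℝ)
    (U Ubar S Sbar : ℕ → Fin m → ℝ)
    (hS : ∀ t i, S t i = thresh (U t i))
    (hSbar : ∀ t i, Sbar t i = thresh (Ubar t i))
    (hU : ∀ t i, U (t + 1) i
      = (∑ j, Sprev (t + 1) j * Pin j i) + U t i * B i - S t i * Uthr i)
    (hUbar : ∀ t i, Ubar (t + 1) i
      = (∑ j, Sprev (t + 1) j * (Pin j i / a i)) + Ubar t i * B i
          - Sbar t i * (Uthr i / a i))
    (h0 : ∀ i, Ubar 0 i = U 0 i / a i) :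
    (∀ t i, Sbar t i = S t i) ∧
    (∀ i, (∑ j, |Pin j i / a i| ^ p) + |Uthr i / a i| ^ p = 1) := by
  have hUbar_eq (t : ℕ) (i : Fin m) : Ubar t i = U t i / a i :=
    lif_trajectory_div (I := fun t => ∑ j, Sprev t j * Pin j i) (β := B i) (θ := Uthr i)
      (u := (U · i)) (v := (Ubar · i)) (ha i)
      (fun t => by rw [hU, hS, lifStep])
      (fun t => by simp only [hUbar, hSbar, lifStep, mul_div_assoc', ← sum_div]) (h0 i) t
  refine ⟨fun t i => by rw [hSbar, hS, hUbar_eq, thresh_div_of_pos _ (ha i)], fun i => ?_⟩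
  -- the block of neuron `i` as one family over `Option (Fin dIn)`, with `none` the threshold
  have hblock := sum_abs_div_rpow_eq_one (by linarith : p ≠ 0)
    (x := fun o : Option (Fin dIn) => o.elim (Uthr i) (Pin · i))
    (by rw [ha_def, Fintype.sum_option, add_comm]; rfl) (ha i)
  rwa [Fintype.sum_option, add_comm] at hblock
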